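/- arXiv:2104.09582 — 2 statements merged into one kernel-verified Lean document; each statement's English description precedes it below -/
import Mathlib

section
/- Weak duality for the uncertainty bound: for any feasible primal point (c, c_x) with [c; c_x]^⊤ M^{-1}[c; c_x] ≤ Γ² and ‖c − y‖_∞ ≤ δ̄, and any λ > 0, ν ∈ ℝ^d, the dual objective (1/(4λ)) ν^⊤ K ν + (y − (1/(2λ)) b)^⊤ ν + δ̄ ‖ν‖_1 + (1/(4λ)) κ + λ Γ² is an upper bound on c_x, where M = [[K, b],[b^⊤, κ]] is symmetric positive definite. -/
open Matrix

lemma wd_symm_dot {n : Type*} [Fintype n] (M : Matrix n n ℝ) (h : Mᵀ = M) (x y : n → ℝ) :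
    (M *ᵥ x) ⬝ᵥ y = x ⬝ᵥ (M *ᵥ y) := by
  conv_lhs => rw [← h, mulVec_transpose]
  rw [← dotProduct_mulVec]

/-- Generalized Cauchy–Schwarz + AM-GM step. -/
lemma wd_key {n : Type*} [Fintype n] [DecidableEq n] (M : Matrix n n ℝ) (hM : M.PosDef)
    (z w : n → ℝ) (lam : ℝ) (hlam : 0 < lam) :
    z ⬝ᵥ w ≤ lam * (z ⬝ᵥ (M⁻¹ *ᵥ z)) + (1 / (4 * lam)) * (w ⬝ᵥ (M *ᵥ w)) := by
  have hsym : Mᵀ = M := by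
    have := hM.isHermitian
    exact (Matrix.conjTranspose_eq_transpose_of_trivial M).symm.trans this
  set a := M⁻¹ *ᵥ z with ha
  have hMa : M *ᵥ a = z := by
    rw [ha, mulVec_mulVec, Matrix.mul_nonsing_inv _ (isUnit_iff_isUnit_det _ |>.1 hM.isUnit),
      one_mulVec]
  set u := a - (1 / (2 * lam)) • w with hu
  have h0 : 0 ≤ 4 * lam ^ 2 * (u ⬝ᵥ (M *ᵥ u)) :=
    mul_nonneg (by positivity) (by have := hM.posSemidef.dotProduct_mulVec_nonneg u; rwa [star_trivial] at this)
  have hexp : 4 * lam ^ 2 * (u ⬝ᵥ (M *ᵥ u)) = 4 * lam ^ 2 * (a ⬝ᵥ (M *ᵥ a))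
      - 4 * lam * (a ⬝ᵥ (M *ᵥ w)) + w ⬝ᵥ (M *ᵥ w) := by
    have hc : w ⬝ᵥ (M *ᵥ a) = a ⬝ᵥ (M *ᵥ w) := by
      rw [← wd_symm_dot M hsym w a, dotProduct_comm]
    simp only [hu, sub_dotProduct, dotProduct_sub, mulVec_sub, mulVec_smul, smul_dotProduct,
      dotProduct_smul, smul_eq_mul, hc]
    field_simp
    ring
  have hzw : z ⬝ᵥ w = a ⬝ᵥ (M *ᵥ w) := by rw [← hMa, wd_symm_dot M hsym a w]
  have hza : z ⬝ᵥ (M⁻¹ *ᵥ z) = a ⬝ᵥ (M *ᵥ a) := by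
    rw [← ha, ← hMa, wd_symm_dot M hsym a a, hMa]
  rw [hzw, hza]
  have h4 : (0:ℝ) < 4 * lam := by linarith
  have hmain : 0 ≤ (4 * lam ^ 2 * (a ⬝ᵥ (M *ᵥ a)) + w ⬝ᵥ (M *ᵥ w)
      - 4 * lam * (a ⬝ᵥ (M *ᵥ w))) / (4 * lam) :=
    div_nonneg (by linarith [hexp ▸ h0]) h4.le
  have heq : (4 * lam ^ 2 * (a ⬝ᵥ (M *ᵥ a)) + w ⬝ᵥ (M *ᵥ w)
      - 4 * lam * (a ⬝ᵥ (M *ᵥ w))) / (4 * lam)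
      = lam * (a ⬝ᵥ (M *ᵥ a)) + 1 / (4 * lam) * (w ⬝ᵥ (M *ᵥ w)) - a ⬝ᵥ (M *ᵥ w) := by
    field_simp
  linarith [heq ▸ hmain]

/-- weak duality: every dual point upper-bounds `c_x` for every
primal feasible point. `M = [[K, b],[bᵀ, κ]]`. The Pi norm on `Fin d → ℝ` is
the sup norm and `∑ i, |ν i|` is the 1-norm. -/
theorem weak_duality_uncertainty_bound {d : ℕ}
    (K : Matrix (Fin d) (Fin d) ℝ) (b : Fin d → ℝ) (κ : ℝ)
    (hM : (Matrix.fromBlocks K (Matrix.of fun i (_ : Unit) => b i)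
      (Matrix.of fun _ : Unit => fun j => b j)
      (Matrix.of fun _ _ : Unit => κ)).PosDef)
    (Γ δbar : ℝ) (hΓ : 0 < Γ) (hδ : 0 ≤ δbar) (y : Fin d → ℝ)
    (c : Fin d → ℝ) (cx : ℝ)
    (hfeas1 : (Sum.elim c fun _ : Unit => cx) ⬝ᵥ
      ((Matrix.fromBlocks K (Matrix.of fun i (_ : Unit) => b i)
        (Matrix.of fun _ : Unit => fun j => b j)
        (Matrix.of fun _ _ : Unit => κ))⁻¹ *ᵥ Sum.elim c fun _ : Unit => cx) ≤ Γ ^ 2)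
    (hfeas2 : ‖c - y‖ ≤ δbar)
    (lam : ℝ) (hlam : 0 < lam) (ν : Fin d → ℝ) :
    cx ≤ (1 / (4 * lam)) * (ν ⬝ᵥ (K *ᵥ ν)) +
      (y - (1 / (2 * lam)) • b) ⬝ᵥ ν + δbar * ∑ i, |ν i| +
      (1 / (4 * lam)) * κ + lam * Γ ^ 2 := by
  set M := Matrix.fromBlocks K (Matrix.of fun i (_ : Unit) => b i)
      (Matrix.of fun _ : Unit => fun j => b j)
      (Matrix.of fun _ _ : Unit => κ) with hMdef
  set z : (Fin d ⊕ Unit) → ℝ := Sum.elim c fun _ : Unit => cx with hz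
  set w : (Fin d ⊕ Unit) → ℝ := Sum.elim (-ν) fun _ : Unit => (1:ℝ) with hw
  have hkey := wd_key M hM z w lam hlam
  have h1 : lam * (z ⬝ᵥ (M⁻¹ *ᵥ z)) ≤ lam * Γ ^ 2 :=
    mul_le_mul_of_nonneg_left hfeas1 hlam.le
  -- compute z ⬝ᵥ w
  have hzw : z ⬝ᵥ w = -(c ⬝ᵥ ν) + cx := by
    simp [hz, hw, dotProduct, Fintype.sum_sum_type, mul_comm]
  -- compute w ⬝ᵥ (M *ᵥ w)
  have hwMw : w ⬝ᵥ (M *ᵥ w) = ν ⬝ᵥ (K *ᵥ ν) - 2 * (b ⬝ᵥ ν) + κ := by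
    rw [hMdef, hw, Matrix.fromBlocks_mulVec]
    simp only [dotProduct, Fintype.sum_sum_type, Matrix.mulVec, Matrix.of_apply, Pi.add_apply,
      Sum.elim_inl, Sum.elim_inr, Pi.neg_apply, Finset.univ_unique, Finset.sum_singleton,
      mul_one, one_mul, mul_neg, neg_mul, neg_neg, Function.comp]
    simp [mul_add, Finset.sum_add_distrib, neg_add, Finset.mul_sum, sub_eq_add_neg, two_mul,
      mul_comm, mul_left_comm, neg_mul, mul_neg, Finset.sum_neg_distrib]
    rw [← Finset.sum_mul]
    ring
  -- L-infinity bound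
  have hlin : c ⬝ᵥ ν ≤ y ⬝ᵥ ν + δbar * ∑ i, |ν i| := by
    have h2 : c ⬝ᵥ ν = (c - y) ⬝ᵥ ν + y ⬝ᵥ ν := by
      rw [sub_dotProduct]; ring
    rw [h2]
    have h3 : (c - y) ⬝ᵥ ν ≤ δbar * ∑ i, |ν i| := by
      rw [Finset.mul_sum]
      refine le_trans (Finset.sum_le_sum fun i _ => le_abs_self _) ?_
      refine Finset.sum_le_sum fun i _ => ?_
      rw [abs_mul]
      refine mul_le_mul_of_nonneg_right ?_ (abs_nonneg _)
      calc |(c - y) i| = ‖(c - y) i‖ := rfl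
        _ ≤ ‖c - y‖ := norm_le_pi_norm (c - y) i
        _ ≤ δbar := hfeas2
    linarith
  -- combine
  rw [hzw, hwMw] at hkey
  have hrhs : (y - (1 / (2 * lam)) • b) ⬝ᵥ ν = y ⬝ᵥ ν - (1/(2*lam)) * (b ⬝ᵥ ν) := by
    rw [sub_dotProduct, smul_dotProduct, smul_eq_mul]
  rw [hrhs]
  have hfl : (1 / (4 * lam)) * (ν ⬝ᵥ (K *ᵥ ν) - 2 * (b ⬝ᵥ ν) + κ)
      = (1 / (4 * lam)) * (ν ⬝ᵥ (K *ᵥ ν)) - (1/(2*lam)) * (b ⬝ᵥ ν) + (1/(4*lam)) * κ := by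
    field_simp; ring
  linarith [hkey, h1, hlin, hfl.ge, hfl.le]
end

section
/- Dual reformulation of the worst-case noise term: for a symmetric positive definite matrix K ∈ ℝ^{d×d}, y ∈ ℝ^d, and δ̄ ≥ 0, max over ‖δ‖_∞ ≤ δ̄ of (−δ^⊤ K^{-1} δ + 2 y^⊤ K^{-1} δ) equals min over ν ∈ ℝ^d of ((1/4) ν^⊤ K ν + ν^⊤ y + δ̄ ‖ν‖_1) + y^⊤ K^{-1} y. -/
open Matrix

private lemma dot_swap {d : ℕ} {A : Matrix (Fin d) (Fin d) ℝ} (hA : A.IsSymm)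
    (x z : Fin d → ℝ) : x ⬝ᵥ (A *ᵥ z) = z ⬝ᵥ (A *ᵥ x) := by
  conv_lhs => rw [dotProduct_mulVec, ← hA.eq, vecMul_transpose, dotProduct_comm]

private lemma expand_add {d : ℕ} {A : Matrix (Fin d) (Fin d) ℝ} (hA : A.IsSymm)
    (u w : Fin d → ℝ) :
    (u + w) ⬝ᵥ (A *ᵥ (u + w)) =
      u ⬝ᵥ (A *ᵥ u) + 2 * (w ⬝ᵥ (A *ᵥ u)) + w ⬝ᵥ (A *ᵥ w) := by
  have h := dot_swap hA u w
  simp only [Matrix.mulVec_add, dotProduct_add, add_dotProduct]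
  linarith

/-- strong duality for the worst-case noise term.
The Pi norm on `Fin d → ℝ` is the sup norm; `∑ i, |ν i|` is the 1-norm. -/
theorem worst_case_noise_duality {d : ℕ}
    (K : Matrix (Fin d) (Fin d) ℝ) (hK : K.PosDef) (hKsymm : K.IsSymm)
    (y : Fin d → ℝ) (δbar : ℝ) (hδ : 0 ≤ δbar) :
    sSup {t : ℝ | ∃ δ : Fin d → ℝ, ‖δ‖ ≤ δbar ∧
        t = -(δ ⬝ᵥ (K⁻¹ *ᵥ δ)) + 2 * (y ⬝ᵥ (K⁻¹ *ᵥ δ))} =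
    sInf {t : ℝ | ∃ ν : Fin d → ℝ,
        t = (1 / 4) * (ν ⬝ᵥ (K *ᵥ ν)) + ν ⬝ᵥ y + δbar * ∑ i, |ν i|} +
      y ⬝ᵥ (K⁻¹ *ᵥ y) := by
  set A := K⁻¹ with hAdef
  have hdet : IsUnit K.det := hK.det_pos.ne'.isUnit
  have hKA : K * A = 1 := mul_nonsing_inv K hdet
  have hApd : A.PosDef := hK.inv
  have hAsymm : A.IsSymm := by
    unfold Matrix.IsSymm
    rw [hAdef, transpose_nonsing_inv, hKsymm.eq]
  have hKpos : ∀ x : Fin d → ℝ, 0 ≤ x ⬝ᵥ (K *ᵥ x) := fun x => by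
    simpa using hK.posSemidef.dotProduct_mulVec_nonneg x
  have hApos : ∀ x : Fin d → ℝ, x ≠ 0 → 0 < x ⬝ᵥ (A *ᵥ x) := fun x hx => by
    simpa using hApd.dotProduct_mulVec_pos hx
  set f : (Fin d → ℝ) → ℝ := fun δ => -(δ ⬝ᵥ (A *ᵥ δ)) + 2 * (y ⬝ᵥ (A *ᵥ δ)) with hf
  set g : (Fin d → ℝ) → ℝ := fun ν =>
    (1 / 4) * (ν ⬝ᵥ (K *ᵥ ν)) + ν ⬝ᵥ y + δbar * ∑ i, |ν i| with hg
  -- completing the square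
  have hfsq : ∀ δ : Fin d → ℝ,
      f δ = y ⬝ᵥ (A *ᵥ y) - ((δ - y) ⬝ᵥ (A *ᵥ (δ - y))) := by
    intro δ
    have h := expand_add hAsymm δ (-y)
    have h2 := dot_swap hAsymm y δ
    rw [← sub_eq_add_neg] at h
    simp only [Matrix.mulVec_neg, dotProduct_neg, neg_dotProduct, neg_neg] at h
    simp only [hf]
    linarith
  -- key quadratic identity
  have hquad : ∀ (ν w : Fin d → ℝ),
      (1 / 4) * ((ν + (2:ℝ) • (A *ᵥ w)) ⬝ᵥ (K *ᵥ (ν + (2:ℝ) • (A *ᵥ w)))) =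
      (1 / 4) * (ν ⬝ᵥ (K *ᵥ ν)) + ν ⬝ᵥ w + w ⬝ᵥ (A *ᵥ w) := by
    intro ν w
    have h := expand_add hKsymm ν ((2:ℝ) • (A *ᵥ w))
    have hKAw : K *ᵥ (A *ᵥ w) = w := by
      rw [Matrix.mulVec_mulVec, hKA, Matrix.one_mulVec]
    have h1 : ((2:ℝ) • (A *ᵥ w)) ⬝ᵥ (K *ᵥ ν) = 2 * (ν ⬝ᵥ w) := by
      rw [smul_dotProduct, dot_swap hKsymm _ ν, hKAw, smul_eq_mul]
    have h2 : ((2:ℝ) • (A *ᵥ w)) ⬝ᵥ (K *ᵥ ((2:ℝ) • (A *ᵥ w))) = 4 * (w ⬝ᵥ (A *ᵥ w)) := by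
      rw [smul_dotProduct, Matrix.mulVec_smul, dotProduct_smul, hKAw,
        dotProduct_comm, smul_eq_mul, smul_eq_mul]
      ring
    rw [h, h1, h2]; ring
  -- continuity of f
  have hfc : Continuous f := by
    have hid : Continuous fun δ : Fin d → ℝ => δ := continuous_id
    have hmv : Continuous fun δ : Fin d → ℝ => A *ᵥ δ :=
      Continuous.matrix_mulVec (continuous_const : Continuous fun _ : Fin d → ℝ => A) hid
    have h1 : Continuous fun δ : Fin d → ℝ => δ ⬝ᵥ (A *ᵥ δ) := hid.dotProduct hmv
    have h2 : Continuous fun δ : Fin d → ℝ => y ⬝ᵥ (A *ᵥ δ) :=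
      (continuous_const : Continuous fun _ : Fin d → ℝ => y).dotProduct hmv
    exact h1.neg.add (continuous_const.mul h2)
  -- obtain a primal maximizer
  obtain ⟨δs, hδs_mem, hδs_max'⟩ :=
    (isCompact_closedBall (0 : Fin d → ℝ) δbar).exists_isMaxOn
      ⟨0, Metric.mem_closedBall_self hδ⟩ hfc.continuousOn
  have hball : ∀ x : Fin d → ℝ, x ∈ Metric.closedBall (0 : Fin d → ℝ) δbar ↔ ∀ i, |x i| ≤ δbar := by
    intro x
    rw [Metric.mem_closedBall, dist_zero_right, pi_norm_le_iff_of_nonneg hδ]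
    simp [Real.norm_eq_abs]
  have hδs_bd : ∀ i, |δs i| ≤ δbar := (hball δs).mp hδs_mem
  have hδs_max : ∀ x ∈ Metric.closedBall (0 : Fin d → ℝ) δbar, f x ≤ f δs := hδs_max'
  set νs : Fin d → ℝ := (2:ℝ) • (A *ᵥ (δs - y)) with hνs
  have hνsi : ∀ i, νs i = 2 * (A *ᵥ (δs - y)) i := fun i => rfl
  have hAii : ∀ i, 0 < A i i := by
    intro i
    have hne : (Pi.single i 1 : Fin d → ℝ) ≠ 0 := by
      intro h
      have := congrFun h i
      simp at this
    have := hApos _ hne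
    simpa [single_dotProduct, Matrix.mulVec_single] using this
  -- coordinate-wise expansion of f
  have hstep : ∀ (i : Fin d) (s : ℝ),
      f (δs + s • (Pi.single i 1 : Fin d → ℝ)) = f δs - s * νs i - s^2 * A i i := by
    intro i s
    rw [hfsq, hfsq]
    have hre : δs + s • (Pi.single i 1 : Fin d → ℝ) - y = (δs - y) + s • (Pi.single i 1 : Fin d → ℝ) := by
      abel
    rw [hre, expand_add hAsymm (δs - y) (s • (Pi.single i 1 : Fin d → ℝ))]
    have e1 : (s • (Pi.single i 1 : Fin d → ℝ)) ⬝ᵥ (A *ᵥ (δs - y))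
        = s * ((A *ᵥ (δs - y)) i) := by
      rw [smul_dotProduct, single_dotProduct, smul_eq_mul]; ring
    have e2 : (s • (Pi.single i 1 : Fin d → ℝ)) ⬝ᵥ (A *ᵥ (s • (Pi.single i 1 : Fin d → ℝ)))
        = s^2 * A i i := by
      rw [smul_dotProduct, Matrix.mulVec_smul, dotProduct_smul, single_dotProduct,
        smul_eq_mul, smul_eq_mul, Matrix.mulVec_single_one, Matrix.col_apply]
      ring_nf
    rw [e1, e2, hνsi i]
    ring
  -- the key first-order inequality at the maximizer
  have key : ∀ (i : Fin d) (s : ℝ), |δs i + s| ≤ δbar → 0 ≤ s * νs i + s^2 * A i i := by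
    intro i s hs
    have hmem : δs + s • (Pi.single i 1 : Fin d → ℝ) ∈ Metric.closedBall (0 : Fin d → ℝ) δbar := by
      rw [hball]
      intro j
      by_cases hji : j = i
      · subst hji
        simpa [Pi.single_apply] using hs
      · simpa [Pi.single_apply, hji] using hδs_bd j
    have := hδs_max _ hmem
    rw [hstep i s] at this
    linarith
  -- complementarity
  have hcomp : ∀ i, νs i * δs i = -(δbar * |νs i|) := by
    intro i
    rcases lt_trichotomy (νs i) 0 with hν | hν | hν
    · have hδi : δs i = δbar := by
        by_contra hne
        have hlt : δs i < δbar := lt_of_le_of_ne (le_of_abs_le (hδs_bd i)) hne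
        set ε := min (δbar - δs i) (-νs i / (2 * A i i)) with hε
        have hε0 : 0 < ε := lt_min (by linarith) (div_pos (by linarith) (by have := hAii i; linarith))
        have h1 : |δs i + ε| ≤ δbar := by
          rw [abs_le]
          constructor
          · have := neg_le_of_abs_le (hδs_bd i); linarith
          · have := min_le_left (δbar - δs i) (-νs i / (2 * A i i)); linarith
        have h2 := key i ε h1
        have h3 : ε * (2 * A i i) ≤ -νs i :=
          (le_div_iff₀ (by have := hAii i; linarith)).mp (min_le_right _ _)
        nlinarith [hAii i, mul_pos hε0 hε0]
      rw [hδi, abs_of_neg hν]; ring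
    · simp [hν]
    · have hδi : δs i = -δbar := by
        by_contra hne
        have hlt : -δbar < δs i := lt_of_le_of_ne (neg_le_of_abs_le (hδs_bd i)) (Ne.symm hne)
        set ε := min (δs i + δbar) (νs i / (2 * A i i)) with hε
        have hε0 : 0 < ε := lt_min (by linarith) (div_pos (by linarith) (by have := hAii i; linarith))
        have h1 : |δs i + -ε| ≤ δbar := by
          rw [abs_le]
          constructor
          · have := min_le_left (δs i + δbar) (νs i / (2 * A i i)); linarith
          · have := le_of_abs_le (hδs_bd i); linarith
        have h2 := key i (-ε) h1
        have h3 : ε * (2 * A i i) ≤ νs i :=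
          (le_div_iff₀ (by have := hAii i; linarith)).mp (min_le_right _ _)
        nlinarith [hAii i, mul_pos hε0 hε0]
      rw [hδi, abs_of_pos hν]; ring
  -- strong duality value
  have hcompsum : δbar * ∑ i, |νs i| = -(νs ⬝ᵥ δs) := by
    rw [Finset.mul_sum, dotProduct, ← Finset.sum_neg_distrib]
    exact Finset.sum_congr rfl fun i _ => by rw [hcomp i, neg_neg]
  have hsym0 : ∀ u : Fin d → ℝ, ((-u) ⬝ᵥ (A *ᵥ (-u))) = u ⬝ᵥ (A *ᵥ u) := by
    intro u
    rw [Matrix.mulVec_neg, dotProduct_neg, neg_dotProduct, neg_neg]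
  have hstrong : g νs = f δs - y ⬝ᵥ (A *ᵥ y) := by
    have h0 : νs + (2:ℝ) • (A *ᵥ (y - δs)) = 0 := by
      rw [hνs, ← smul_add, ← Matrix.mulVec_add]
      simp
    have hq := hquad νs (y - δs)
    rw [h0] at hq
    simp only [zero_dotProduct, mul_zero] at hq
    have hν_sub : νs ⬝ᵥ (y - δs) = νs ⬝ᵥ y - νs ⬝ᵥ δs := dotProduct_sub _ _ _
    have hflip : (δs - y) ⬝ᵥ (A *ᵥ (δs - y)) = (y - δs) ⬝ᵥ (A *ᵥ (y - δs)) := by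
      rw [← hsym0 (y - δs), neg_sub]
    rw [hg, hfsq δs]
    simp only
    rw [hcompsum, hflip]
    linarith
  -- weak duality
  have hweak : ∀ ν : Fin d → ℝ, f δs - y ⬝ᵥ (A *ᵥ y) ≤ g ν := by
    intro ν
    have h1 : -(ν ⬝ᵥ δs) ≤ δbar * ∑ i, |ν i| := by
      rw [dotProduct, ← Finset.sum_neg_distrib, Finset.mul_sum]
      refine Finset.sum_le_sum fun i _ => ?_
      calc -(ν i * δs i) ≤ |ν i * δs i| := neg_le_abs _
        _ = |ν i| * |δs i| := abs_mul _ _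
        _ ≤ |ν i| * δbar := mul_le_mul_of_nonneg_left (hδs_bd i) (abs_nonneg _)
        _ = δbar * |ν i| := mul_comm _ _
    have h2 := hquad ν (y - δs)
    have h3 := hKpos (ν + (2:ℝ) • (A *ᵥ (y - δs)))
    have h4 : 0 ≤ (1 / 4) * (ν ⬝ᵥ (K *ᵥ ν)) + ν ⬝ᵥ (y - δs) + (y - δs) ⬝ᵥ (A *ᵥ (y - δs)) := by
      rw [← h2]; positivity
    have hν_sub : ν ⬝ᵥ (y - δs) = ν ⬝ᵥ y - ν ⬝ᵥ δs := dotProduct_sub _ _ _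
    have hflip : (δs - y) ⬝ᵥ (A *ᵥ (δs - y)) = (y - δs) ⬝ᵥ (A *ᵥ (y - δs)) := by
      rw [← hsym0 (y - δs), neg_sub]
    rw [hg, hfsq δs]
    simp only
    rw [hflip]
    linarith
  -- assemble
  have hSup : sSup {t : ℝ | ∃ δ : Fin d → ℝ, ‖δ‖ ≤ δbar ∧
      t = -(δ ⬝ᵥ (A *ᵥ δ)) + 2 * (y ⬝ᵥ (A *ᵥ δ))} = f δs := by
    apply IsGreatest.csSup_eq
    constructor
    · refine ⟨δs, ?_, rfl⟩
      have := hδs_mem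
      rwa [Metric.mem_closedBall, dist_zero_right] at this
    · rintro t ⟨δ, hδ1, rfl⟩
      exact hδs_max δ (by rwa [Metric.mem_closedBall, dist_zero_right])
  have hInf : sInf {t : ℝ | ∃ ν : Fin d → ℝ,
      t = (1 / 4) * (ν ⬝ᵥ (K *ᵥ ν)) + ν ⬝ᵥ y + δbar * ∑ i, |ν i|} = g νs := by
    apply IsLeast.csInf_eq
    constructor
    · exact ⟨νs, rfl⟩
    · rintro t ⟨ν, rfl⟩
      rw [hstrong]
      exact hweak ν
  rw [hSup, hInf, hstrong]
  ring
end
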